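/- If a weak composition b of length n is a slide of a, then b is a fixed slide of exactly one weak composition c with c ≥ a and flat(c) = flat(a). (Uniqueness part: if b ∈ FixSlide(c) and b ∈ FixSlide(c') with flat(c) = flat(c') = flat(a), then c = c'.) -/
import Mathlib


open MvPolynomial
open scoped Classical

noncomputable section

/-- Partial sum of the first `k` entries of a weak composition. -/
def psum {n : ℕ} (a : Fin n → ℕ) (k : ℕ) : ℕ :=
  ∑ i ∈ Finset.univ.filter (fun i : Fin n => (i : ℕ) < k), a i

/-- Dominance order: `Dom a b` means `b ≥ a`, i.e. every partial sum of `b`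
is at least the corresponding partial sum of `a`. -/
def Dom {n : ℕ} (a b : Fin n → ℕ) : Prop := ∀ k : ℕ, psum a k ≤ psum b k

/-- `flat a`: the list of nonzero entries of `a`, in order. -/
def flat {n : ℕ} (a : Fin n → ℕ) : List ℕ := (List.ofFn a).filter (· ≠ 0)

/-- The monomial `x^b`. -/
def mono {n : ℕ} (b : Fin n → ℕ) : MvPolynomial (Fin n) ℤ := ∏ i, X i ^ b i

/-- Finite set of weak compositions of length `n` with all entries `≤ N`. -/
def box (n N : ℕ) : Finset (Fin n → ℕ) := Fintype.piFinset fun _ => Finset.range (N + 1)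

/-- A single slide move relative to the base composition `a`: a local move
`(…,0,k,…) → (…,i,j,…)` with `i + j = k`.  When `fixed = true` we additionally
require `j > 0` whenever `k` occupies a position that is nonzero in `a`. -/
def SlideMove {n : ℕ} (a : Fin n → ℕ) (fixed : Bool) (b c : Fin n → ℕ) : Prop :=
  ∃ (p : ℕ) (hp : p + 1 < n) (i j : ℕ),
    b ⟨p, Nat.lt_of_succ_lt hp⟩ = 0 ∧
    i + j = b ⟨p + 1, hp⟩ ∧
    (fixed = true → a ⟨p + 1, hp⟩ ≠ 0 → 0 < j) ∧
    c = Function.update (Function.update b ⟨p, Nat.lt_of_succ_lt hp⟩ i) ⟨p + 1, hp⟩ j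

/-- `b` is a slide of `a`. -/
def Slides {n : ℕ} (a b : Fin n → ℕ) : Prop :=
  Relation.ReflTransGen (SlideMove a false) a b

/-- `b` is a fixed slide of `a`. -/
def FixSlides {n : ℕ} (a b : Fin n → ℕ) : Prop :=
  Relation.ReflTransGen (SlideMove a true) a b

/-- The monomial slide polynomial `M_a`. -/
def Mslide {n : ℕ} (a : Fin n → ℕ) : MvPolynomial (Fin n) ℤ :=
  ∑ b ∈ (box n (∑ i, a i)).filter (fun b => Dom a b ∧ flat b = flat a), mono b

/-- The fundamental slide polynomial `F_a`, as the generating function of slides. -/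
def Fslide {n : ℕ} (a : Fin n → ℕ) : MvPolynomial (Fin n) ℤ :=
  ∑ b ∈ (box n (∑ i, a i)).filter (fun b => Slides a b), mono b

/-- The fundamental particle polynomial `L_a`, the generating function of fixed slides. -/
def Lpart {n : ℕ} (a : Fin n → ℕ) : MvPolynomial (Fin n) ℤ :=
  ∑ b ∈ (box n (∑ i, a i)).filter (fun b => FixSlides a b), mono b

/-- A left swap: exchange entries `b i ≤ b j` with `i < j`. -/
def LSwap {n : ℕ} (b c : Fin n → ℕ) : Prop :=
  ∃ i j : Fin n, i < j ∧ b i ≤ b j ∧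
    c = Function.update (Function.update b i (b j)) j (b i)



/-! ### Auxiliary lemmas -/

section Aux

variable {n : ℕ}

lemma psum_mono (f : Fin n → ℕ) {k l : ℕ} (h : k ≤ l) : psum f k ≤ psum f l := by
  apply Finset.sum_le_sum_of_subset
  intro i hi
  simp only [Finset.mem_filter, Finset.mem_univ, true_and] at *
  omega

lemma psum_succ (f : Fin n → ℕ) (k : ℕ) :
    psum f (k + 1) = psum f k + (if h : k < n then f ⟨k, h⟩ else 0) := by
  by_cases h : k < n
  · rw [dif_pos h]
    have hset : (Finset.univ.filter (fun i : Fin n => (i : ℕ) < k + 1))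
        = insert (⟨k, h⟩ : Fin n) (Finset.univ.filter (fun i : Fin n => (i : ℕ) < k)) := by
      ext i
      simp [Fin.ext_iff]
      omega
    rw [_root_.psum, hset, Finset.sum_insert (by simp)]
    exact Nat.add_comm _ _
  · rw [dif_neg h]
    simp only [Nat.add_zero]
    rw [_root_.psum, _root_.psum]
    apply Finset.sum_congr _ (fun _ _ => rfl)
    ext i
    have := i.2
    simp only [Finset.mem_filter, Finset.mem_univ, true_and]
    omega

lemma psum_move {p : ℕ} (hp : p + 1 < n) (b : Fin n → ℕ) (i j : ℕ)
    (hbP : b ⟨p, Nat.lt_of_succ_lt hp⟩ = 0) (hij : i + j = b ⟨p + 1, hp⟩) (k : ℕ) :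
    psum (Function.update (Function.update b ⟨p, Nat.lt_of_succ_lt hp⟩ i) ⟨p + 1, hp⟩ j) k
      = psum b k + (if k = p + 1 then i else 0) := by
  set P : Fin n := ⟨p, Nat.lt_of_succ_lt hp⟩ with hPdef
  set Q : Fin n := ⟨p + 1, hp⟩ with hQdef
  have hPQ : P ≠ Q := by simp [hPdef, hQdef, Fin.ext_iff]
  rcases lt_trichotomy k (p + 1) with hk | hk | hk
  · rw [if_neg (by omega), _root_.psum, _root_.psum]
    apply Finset.sum_congr rfl
    intro x hx
    simp only [Finset.mem_filter, Finset.mem_univ, true_and] at hx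
    rw [Function.update_apply, if_neg (by simp [hQdef, Fin.ext_iff]; omega),
      Function.update_apply, if_neg (by simp [hPdef, Fin.ext_iff]; omega)]
  · subst hk
    rw [if_pos rfl, _root_.psum, _root_.psum]
    set S := Finset.univ.filter (fun x : Fin n => (x : ℕ) < p + 1) with hS
    have hPS : P ∈ S := by simp [hS, hPdef]
    have step1 : ∀ x ∈ S, Function.update (Function.update b P i) Q j x
        = Function.update b P i x := by
      intro x hx
      simp only [hS, Finset.mem_filter, Finset.mem_univ, true_and] at hx
      rw [Function.update_apply, if_neg (by simp [hQdef, Fin.ext_iff]; omega)]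
    rw [Finset.sum_congr rfl step1, Finset.sum_update_of_mem hPS,
      Finset.sum_eq_sum_sdiff_singleton_add hPS, hbP]
    omega
  · rw [if_neg (by omega), _root_.psum, _root_.psum]
    set S := Finset.univ.filter (fun x : Fin n => (x : ℕ) < k) with hS
    have hQS : Q ∈ S := by simp [hS, hQdef]; omega
    have hPS : P ∈ S \ {Q} := by
      simp [hS, hPdef, hQdef, Fin.ext_iff]
      omega
    rw [Finset.sum_update_of_mem hQS, Finset.sum_update_of_mem hPS,
      Finset.sum_eq_sum_sdiff_singleton_add hQS, Finset.sum_eq_sum_sdiff_singleton_add hPS, hbP]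
    omega

/-- The reachability invariant for fixed slides. -/
def SInv {n : ℕ} (c b : Fin n → ℕ) : Prop :=
  ∀ s : Fin n, c s ≠ 0 → b s ≠ 0 ∧ psum b ((s : ℕ) + 1) = psum c ((s : ℕ) + 1)

lemma sInv_refl (c : Fin n → ℕ) : SInv c c := fun _ h => ⟨h, rfl⟩

lemma sInv_step {c d e : Fin n → ℕ} (hd : SInv c d) (h : SlideMove c true d e) : SInv c e := by
  obtain ⟨p, hp, i, j, hd0, hij, hfix, rfl⟩ := h
  intro s hs
  have hps := psum_move hp d i j hd0 hij
  have hsP : s ≠ ⟨p, Nat.lt_of_succ_lt hp⟩ := by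
    intro hEq
    exact (hd s hs).1 (hEq ▸ hd0)
  constructor
  · by_cases hsQ : s = ⟨p + 1, hp⟩
    · subst hsQ
      have hj := hfix rfl hs
      simp only [Function.update_self]
      omega
    · rw [Function.update_apply, if_neg hsQ, Function.update_apply, if_neg hsP]
      exact (hd s hs).1
  · have h1 := hps ((s : ℕ) + 1)
    have h2 : ¬ ((s : ℕ) + 1 = p + 1) := by simp [Fin.ext_iff] at hsP; omega
    rw [if_neg h2] at h1
    simp only [Nat.add_zero] at h1
    rw [h1]
    exact (hd s hs).2

lemma sInv_of_fixSlides {c b : Fin n → ℕ} (h : FixSlides c b) : SInv c b := by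
  induction h with
  | refl => exact sInv_refl c
  | tail _ hstep ih => exact sInv_step ih hstep

/-- merge positions p, p+1 into p -/
def rmap {n : ℕ} (p : ℕ) (hp : p + 1 < n) (f : Fin n → ℕ) : Fin n → ℕ :=
  Function.update (Function.update f ⟨p, Nat.lt_of_succ_lt hp⟩
    (f ⟨p, Nat.lt_of_succ_lt hp⟩ + f ⟨p + 1, hp⟩)) ⟨p + 1, hp⟩ 0

lemma upd2 (f : Fin n → ℕ) (a b x : Fin n) (u v : ℕ) :
    Function.update (Function.update f a u) b v x
      = if x = b then v else if x = a then u else f x := by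
  rw [Function.update_apply, Function.update_apply]

lemma rmap_apply (p : ℕ) (hp : p + 1 < n) (f : Fin n → ℕ) (x : Fin n) :
    rmap p hp f x = if x = ⟨p + 1, hp⟩ then 0
      else if x = ⟨p, Nat.lt_of_succ_lt hp⟩ then f ⟨p, Nat.lt_of_succ_lt hp⟩ + f ⟨p + 1, hp⟩
      else f x := upd2 ..

lemma sim_step {c : Fin n → ℕ} {p : ℕ} (hp : p + 1 < n) (hcQ : c ⟨p + 1, hp⟩ ≠ 0)
    {d e : Fin n → ℕ} (hdQ : d ⟨p + 1, hp⟩ ≠ 0) (h : SlideMove c true d e) :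
    Relation.ReflTransGen (SlideMove (rmap p hp c) true) (rmap p hp d) (rmap p hp e) := by
  obtain ⟨q, hq, i, j, hd0, hij, hfix, rfl⟩ := h
  rcases eq_or_ne q p with rfl | hqp
  · -- move at (p, p+1): becomes a no-op
    have : rmap q hp (Function.update (Function.update d ⟨q, Nat.lt_of_succ_lt hq⟩ i)
        ⟨q + 1, hq⟩ j) = rmap q hp d := by
      funext x
      simp only [rmap_apply, upd2]
      split_ifs <;> simp_all [Fin.ext_iff] <;> omega
    rw [this]
  · rcases eq_or_ne (q + 1) p with hq1p | hq1p
    · -- move at (p-1, p)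
      apply Relation.ReflTransGen.single
      refine ⟨q, hq, i, j + d ⟨p + 1, hp⟩, ?_, ?_, ?_, ?_⟩
      · rw [rmap_apply, if_neg (by simp [Fin.ext_iff]; omega),
          if_neg (by simp [Fin.ext_iff]; omega)]
        exact hd0
      · rw [rmap_apply]
        rw [if_neg (by simp [Fin.ext_iff]; omega), if_pos (by simp [Fin.ext_iff]; omega)]
        have h1 : d ⟨q + 1, hq⟩ = d ⟨p, Nat.lt_of_succ_lt hp⟩ := by
          congr 1
          simp [Fin.ext_iff]; omega
        omega
      · intro _ _
        omega
      · funext x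
        simp only [rmap_apply, upd2]
        split_ifs <;> simp_all [Fin.ext_iff] <;> omega
    · rcases eq_or_ne q (p + 1) with rfl | hqp1
      · -- move at (p+1, p+2): impossible
        exact absurd hd0 hdQ
      · -- far away move
        apply Relation.ReflTransGen.single
        refine ⟨q, hq, i, j, ?_, ?_, ?_, ?_⟩
        · rw [rmap_apply, if_neg (by simp [Fin.ext_iff]; omega),
            if_neg (by simp [Fin.ext_iff]; omega)]
          exact hd0
        · rw [rmap_apply, if_neg (by simp [Fin.ext_iff]; omega),
            if_neg (by simp [Fin.ext_iff]; omega)]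
          exact hij
        · intro _ hne
          apply hfix rfl
          rw [rmap_apply, if_neg (by simp [Fin.ext_iff]; omega),
            if_neg (by simp [Fin.ext_iff]; omega)] at hne
          exact hne
        · funext x
          simp only [rmap_apply, upd2]
          split_ifs <;> simp_all [Fin.ext_iff] <;> omega

lemma sim {c b : Fin n → ℕ} {p : ℕ} (hp : p + 1 < n) (hcQ : c ⟨p + 1, hp⟩ ≠ 0)
    (h : FixSlides c b) :
    Relation.ReflTransGen (SlideMove (rmap p hp c) true) (rmap p hp c) (rmap p hp b) := by
  induction h with
  | refl => exact Relation.ReflTransGen.refl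
  | tail hcd hstep ih =>
    have hdQ := (sInv_of_fixSlides hcd ⟨p + 1, hp⟩ hcQ).1
    exact ih.trans (sim_step hp hcQ hdQ hstep)

lemma sum_filter_ne_zero (l : List ℕ) : (l.filter (· ≠ 0)).sum = l.sum := by
  induction l with
  | nil => simp
  | cons a t ih => by_cases ha : a = 0 <;> simp_all [List.filter_cons]

lemma psum_eq_sum_take (f : Fin n → ℕ) (k : ℕ) :
    psum f k = ((List.ofFn f).take k).sum := by
  induction k with
  | zero => simp [_root_.psum]
  | succ k ih =>
    rw [psum_succ, ih]
    by_cases h : k < n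
    · rw [dif_pos h, List.take_succ, List.getElem?_eq_getElem (by simpa using h)]
      simp
    · rw [dif_neg h, List.take_of_length_le (by simpa using by omega),
        List.take_of_length_le (by simpa using by omega)]
      simp

lemma take_ofFn_eq {f g : Fin n → ℕ} (k : ℕ) (h : ∀ x : Fin n, (x : ℕ) < k → f x = g x) :
    (List.ofFn f).take k = (List.ofFn g).take k := by
  apply List.ext_getElem
  · simp
  · intro m h1 h2
    simp only [List.length_take, List.length_ofFn] at h1
    rw [List.getElem_take, List.getElem_take, List.getElem_ofFn, List.getElem_ofFn]
    exact h ⟨m, by omega⟩ (by simpa using by omega)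

lemma drop_ofFn_eq {f g : Fin n → ℕ} (k : ℕ) (h : ∀ x : Fin n, k ≤ (x : ℕ) → f x = g x) :
    (List.ofFn f).drop k = (List.ofFn g).drop k := by
  apply List.ext_getElem
  · simp
  · intro m h1 h2
    simp only [List.length_drop, List.length_ofFn] at h1
    rw [List.getElem_drop, List.getElem_drop, List.getElem_ofFn, List.getElem_ofFn]
    exact h ⟨k + m, by omega⟩ (by simp)

lemma flat_split (f : Fin n → ℕ) (k : ℕ) :
    flat f = ((List.ofFn f).take k).filter (· ≠ 0) ++ ((List.ofFn f).drop k).filter (· ≠ 0) := by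
  rw [flat, ← List.filter_append, List.take_append_drop]

lemma drop_ofFn_cons {f : Fin n → ℕ} {k : ℕ} (hk : k < n) :
    (List.ofFn f).drop k = f ⟨k, hk⟩ :: (List.ofFn f).drop (k + 1) := by
  rw [List.drop_eq_getElem_cons (by simpa using hk)]
  simp

lemma flat_swap {p : ℕ} (hp : p + 1 < n) (f : Fin n → ℕ)
    (hfP : f ⟨p, Nat.lt_of_succ_lt hp⟩ = 0) :
    flat (Function.update (Function.update f ⟨p, Nat.lt_of_succ_lt hp⟩
      (f ⟨p, Nat.lt_of_succ_lt hp⟩ + f ⟨p + 1, hp⟩)) ⟨p + 1, hp⟩ 0) = flat f := by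
  set g := Function.update (Function.update f ⟨p, Nat.lt_of_succ_lt hp⟩
      (f ⟨p, Nat.lt_of_succ_lt hp⟩ + f ⟨p + 1, hp⟩)) ⟨p + 1, hp⟩ 0 with hg
  have hgP : g ⟨p, Nat.lt_of_succ_lt hp⟩ = f ⟨p + 1, hp⟩ := by
    rw [hg, Function.update_apply, if_neg (by simp [Fin.ext_iff]), Function.update_self, hfP,
      Nat.zero_add]
  have hgQ : g ⟨p + 1, hp⟩ = 0 := by rw [hg, Function.update_self]
  have htk : (List.ofFn g).take p = (List.ofFn f).take p := by
    apply take_ofFn_eq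
    intro x hx
    rw [hg, Function.update_apply, if_neg (by simp [Fin.ext_iff]; omega),
      Function.update_apply, if_neg (by simp [Fin.ext_iff]; omega)]
  have hdr : (List.ofFn g).drop (p + 2) = (List.ofFn f).drop (p + 2) := by
    apply drop_ofFn_eq
    intro x hx
    rw [hg, Function.update_apply, if_neg (by simp [Fin.ext_iff]; omega),
      Function.update_apply, if_neg (by simp [Fin.ext_iff]; omega)]
  rw [flat_split g p, flat_split f p, htk,
    drop_ofFn_cons (show p < n by omega), drop_ofFn_cons (show p + 1 < n by omega),
    drop_ofFn_cons (show p < n by omega) (f := f), drop_ofFn_cons (show p + 1 < n by omega) (f := f),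
    hdr, hgP, hgQ, hfP]
  by_cases hx : f ⟨p + 1, hp⟩ = 0 <;> simp [List.filter_cons, hx]

/-- prefix filtered lists are equal when flats agree and tails agree -/
lemma pre_filter_eq {c c' : Fin n → ℕ} (hf : flat c = flat c') {s : ℕ}
    (htail : ∀ u : Fin n, s < (u : ℕ) → c u = c' u) :
    ((List.ofFn c).take (s + 1)).filter (· ≠ 0)
      = ((List.ofFn c').take (s + 1)).filter (· ≠ 0) := by
  have hdrop : (List.ofFn c).drop (s + 1) = (List.ofFn c').drop (s + 1) :=
    drop_ofFn_eq (s + 1) (fun x hx => htail x (by omega))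
  have h1 := flat_split c (s + 1)
  have h2 := flat_split c' (s + 1)
  rw [h1, h2, hdrop] at hf
  exact List.append_cancel_right hf

lemma psum_pre_eq {c c' : Fin n → ℕ} (hf : flat c = flat c') {s : ℕ}
    (htail : ∀ u : Fin n, s < (u : ℕ) → c u = c' u) :
    psum c (s + 1) = psum c' (s + 1) := by
  rw [psum_eq_sum_take, psum_eq_sum_take, ← sum_filter_ne_zero ((List.ofFn c).take (s + 1)),
    ← sum_filter_ne_zero ((List.ofFn c').take (s + 1)), pre_filter_eq hf htail]

lemma uniq_aux {c c' b : Fin n → ℕ} (hf : flat c = flat c') (h1 : SInv c b) (h2 : SInv c' b)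
    {s : ℕ} (hs : s < n) (htail : ∀ u : Fin n, s < (u : ℕ) → c u = c' u)
    (hcs : c ⟨s, hs⟩ ≠ 0) (hcs' : c' ⟨s, hs⟩ = 0) : False := by
  have hpre : psum c (s + 1) = psum c' (s + 1) := psum_pre_eq hf htail
  have hposc : 0 < psum c (s + 1) := by
    have := psum_succ c s
    rw [dif_pos hs] at this
    omega
  have hex : ∃ u : Fin n, (u : ℕ) < s + 1 ∧ c' u ≠ 0 := by
    by_contra hno
    push_neg at hno
    have : psum c' (s + 1) = 0 := by
      apply Finset.sum_eq_zero
      intro x hx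
      simp only [Finset.mem_filter, Finset.mem_univ, true_and] at hx
      exact hno x hx
    omega
  obtain ⟨u, hu1, hu2⟩ := hex
  set Pr : ℕ → Prop := fun t => ∃ h : t < n, c' ⟨t, h⟩ ≠ 0 with hPr
  set t₀ := Nat.findGreatest Pr s with ht₀
  have hPt₀ : Pr t₀ := Nat.findGreatest_spec (m := (u : ℕ)) (by omega) ⟨u.2, by simpa using hu2⟩
  obtain ⟨ht₀n, ht₀ne⟩ := hPt₀
  have ht₀s : t₀ ≤ s := Nat.findGreatest_le s
  have ht₀lt : t₀ < s := by
    rcases Nat.lt_or_ge t₀ s with h | h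
    · exact h
    · exfalso
      apply ht₀ne
      have hts : t₀ = s := by omega
      rw [show (⟨t₀, ht₀n⟩ : Fin n) = ⟨s, hs⟩ from by simp [Fin.ext_iff, hts]]
      exact hcs'
  have hzero : ∀ r : Fin n, t₀ < (r : ℕ) → (r : ℕ) < s + 1 → c' r = 0 := by
    intro r hr1 hr2
    by_contra hr
    exact Nat.findGreatest_is_greatest (k := (r : ℕ)) hr1 (by omega) ⟨r.2, by simpa using hr⟩
  have heq : psum c' (s + 1) = psum c' (t₀ + 1) := by
    rw [_root_.psum, _root_.psum]
    symm
    apply Finset.sum_subset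
    · intro x hx
      simp only [Finset.mem_filter, Finset.mem_univ, true_and] at *
      omega
    · intro x hx hnx
      simp only [Finset.mem_filter, Finset.mem_univ, true_and] at hx hnx
      exact hzero x (by omega) hx
  have hb1 := h1 ⟨s, hs⟩ hcs
  have hb2 := h2 ⟨t₀, ht₀n⟩ ht₀ne
  have hmono : psum b (t₀ + 1) ≤ psum b s := psum_mono b (by omega)
  have hbs := psum_succ b s
  rw [dif_pos hs] at hbs
  have hbspos : 0 < b ⟨s, hs⟩ := Nat.pos_of_ne_zero hb1.1
  simp only [] at hb1 hb2
  omega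

lemma uniq_val {c c' : Fin n → ℕ} (hf : flat c = flat c') {s : ℕ} (hs : s < n)
    (htail : ∀ u : Fin n, s < (u : ℕ) → c u = c' u)
    (h1 : c ⟨s, hs⟩ ≠ 0) (h2 : c' ⟨s, hs⟩ ≠ 0) : c ⟨s, hs⟩ = c' ⟨s, hs⟩ := by
  have hpre := pre_filter_eq hf htail
  have hform : ∀ g : Fin n → ℕ, g ⟨s, hs⟩ ≠ 0 →
      ((List.ofFn g).take (s + 1)).filter (· ≠ 0)
        = ((List.ofFn g).take s).filter (· ≠ 0) ++ [g ⟨s, hs⟩] := by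
    intro g hg
    rw [List.take_succ, List.getElem?_eq_getElem (by simpa using hs), List.filter_append]
    congr 1
    simp [List.getElem_ofFn, hg]
  rw [hform c h1, hform c' h2] at hpre
  have := congrArg List.getLast? hpre
  rw [List.getLast?_concat, List.getLast?_concat] at this
  exact Option.some_injective _ this

lemma uniq {c c' b : Fin n → ℕ} (hf : flat c = flat c') (h1 : SInv c b) (h2 : SInv c' b) :
    c = c' := by
  have key : ∀ k : ℕ, ∀ t : Fin n, n - k ≤ (t : ℕ) → c t = c' t := by
    intro k
    induction k with
    | zero => intro t ht; exact absurd t.2 (by omega)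
    | succ k ih =>
      intro t ht
      by_cases h : n - k ≤ (t : ℕ)
      · exact ih t h
      · obtain ⟨s, hs⟩ := t
        simp only [] at h ht ⊢
        have htail : ∀ u : Fin n, s < (u : ℕ) → c u = c' u := by
          intro u hu
          exact ih u (by omega)
        by_cases hc : c ⟨s, hs⟩ = 0 <;> by_cases hc' : c' ⟨s, hs⟩ = 0
        · rw [hc, hc']
        · exact absurd (uniq_aux hf.symm h2 h1 hs (fun u hu => (htail u hu).symm) hc' hc) id
        · exact absurd (uniq_aux hf h1 h2 hs htail hc hc') id
        · exact uniq_val hf hs htail hc hc'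
  funext t
  exact key n t (by omega)

lemma exists_source {a b : Fin n → ℕ} (h : Slides a b) :
    ∃ c : Fin n → ℕ, Dom a c ∧ flat c = flat a ∧ FixSlides c b := by
  induction h with
  | refl => exact ⟨a, fun _ => le_rfl, rfl, Relation.ReflTransGen.refl⟩
  | @tail b' e' hab hstep ih =>
    obtain ⟨c, hdom, hflat, hfix⟩ := ih
    obtain ⟨p, hp, i, j, hb0, hij, -, rfl⟩ := hstep
    by_cases hj : 0 < j
    · exact ⟨c, hdom, hflat, hfix.tail ⟨p, hp, i, j, hb0, hij, fun _ _ => hj, rfl⟩⟩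
    · have hj0 : j = 0 := by omega
      subst hj0
      by_cases hcQ : c ⟨p + 1, hp⟩ = 0
      · exact ⟨c, hdom, hflat,
          hfix.tail ⟨p, hp, i, 0, hb0, hij, fun _ hne => absurd hcQ hne, rfl⟩⟩
      · -- rebase: move the particle of `c` at position p+1 to position p
        have hinv := sInv_of_fixSlides hfix
        have hcP : c ⟨p, Nat.lt_of_succ_lt hp⟩ = 0 := by
          by_contra hcP
          exact (hinv _ hcP).1 hb0
        refine ⟨rmap p hp c, ?_, ?_, ?_⟩
        · intro k
          have hkey := psum_move hp c (c ⟨p, Nat.lt_of_succ_lt hp⟩ + c ⟨p + 1, hp⟩) 0 hcP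
            (by omega) k
          have hd := hdom k
          unfold rmap
          omega
        · exact (flat_swap hp c hcP).trans hflat
        · have hsim := sim hp hcQ hfix
          have hb' : Function.update (Function.update b' ⟨p, Nat.lt_of_succ_lt hp⟩ i)
              ⟨p + 1, hp⟩ 0 = rmap p hp b' := by
            funext x
            simp only [rmap_apply, upd2]
            split_ifs <;> simp_all [Fin.ext_iff] <;> omega
          rw [hb']
          exact hsim

end Aux

/-- every slide `b` of `a` is a fixed slide of exactly one weak
composition `c` with `c ≥ a` and `flat(c) = flat(a)`. -/
theorem slide_unique_fixSlide_source {n : ℕ} (a b : Fin n → ℕ) (h : Slides a b) :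
    ∃! c : Fin n → ℕ, Dom a c ∧ flat c = flat a ∧ FixSlides c b := by
  obtain ⟨c, hdom, hflat, hfix⟩ := exists_source h
  refine ⟨c, ⟨hdom, hflat, hfix⟩, ?_⟩
  rintro c' ⟨hdom', hflat', hfix'⟩
  exact uniq (hflat'.trans hflat.symm) (sInv_of_fixSlides hfix') (sInv_of_fixSlides hfix)

end
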